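/- arXiv:0801.0465 — 2 statements merged into one kernel-verified Lean document; each statement's English description precedes it below -/
import Mathlib

section
/- The family Ω = {ω_a : a ∈ ℤ} is admissible, that is: (i) for every integer b, ∑_{s=0}^{r} (−1)^{r−s}·σ_{r−s}(u_1,…,u_r)·ω_{s+b} = 0, where σ_i denotes the i-th elementary symmetric polynomial in u_1,…,u_r; and (ii) for every integer a ≥ 0, ω_a = ω_{−a} + ∑_{i=1}^{a} ϱ^{-1}·δ·(ω_{a−i}·ω_{−i} − ω_{a−2i}). -/
/-!
Part (i): every `u j` is a root of `∏ l, (X - u l)`, whose coefficients are the signed elementary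
symmetric functions of the `u l`.

Part (ii): after summing the geometric series in `i`, it reduces to the partial-fraction identity
`∑ k, γ k / (1 - u j * u k) = 1 / (1 - u j ^ 2) - δ⁻¹ϱ` for every `j`. Lagrange interpolation at
the nodes `(u k)⁻¹` writes a polynomial `T` of degree `< r` with
`T (u k)⁻¹ = ψ k * ∏ l ≠ k, (u l - (u k)⁻¹)` as `T x = ∑ k, ψ k * c k * ∏ l ≠ k, (1 - u l * x)`,
where `c k = ∏ l ≠ k, (u k * u l - 1) / (u k - u l)`. The two summands of `γ k / c k` are the
`ψ k` of `(∏ l, (1 - u l X) + G ∏ l, (u l - X)) / (1 - X ^ 2)`, with `G = X` or `-1` according to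
the parity of `r` (the division is exact), and of `(∏ l, u l) ∏ l, (u l - X) - ∏ l, (1 - u l X)`.
Since `∏ l, (u l - X)` vanishes at `u j`, dividing by `∏ l, (1 - u l * u j)` leaves
`1 / (1 - u j ^ 2)` and `-1`.
-/

open Polynomial Finset

theorem Multiset.sum_range_esymm_mul_pow_eq_zero {R : Type*} [CommRing R] [Nontrivial R]
    (s : Multiset R) {x : R} (hx : x ∈ s) :
    ∑ k ∈ Finset.range (card s + 1), (-1) ^ (card s - k) * s.esymm (card s - k) * x ^ k = 0 := by
  have hroot : ((s.map fun t => X - C t).prod).eval x = 0 := by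
    rw [eval_multiset_prod, Multiset.map_map]
    exact Multiset.prod_eq_zero (Multiset.mem_map.mpr ⟨x, hx, by simp⟩)
  rw [eval_eq_sum_range, natDegree_multiset_prod_X_sub_C_eq_card] at hroot
  rw [← hroot]
  refine Finset.sum_congr rfl fun k hk => ?_
  rw [prod_X_sub_C_coeff s (Nat.lt_succ_iff.mp (Finset.mem_range.mp hk))]

section CommRing

variable {R : Type*} [CommRing R] {ι : Type*}

theorem natDegree_prod_le_card {s : Finset ι} {f : ι → R[X]}
    (h : ∀ i ∈ s, (f i).natDegree ≤ 1) : (∏ i ∈ s, f i).natDegree ≤ #s :=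
  (natDegree_prod_le _ _).trans ((sum_le_card_nsmul _ _ 1 h).trans (by simp))

theorem natDegree_prod_one_sub_C_mul_X_le (s : Finset ι) (u : ι → R) :
    (∏ i ∈ s, (1 - C (u i) * X)).natDegree ≤ #s :=
  natDegree_prod_le_card fun _ _ => by compute_degree

theorem natDegree_prod_C_sub_X_le (s : Finset ι) (u : ι → R) :
    (∏ i ∈ s, (C (u i) - X)).natDegree ≤ #s :=
  natDegree_prod_le_card fun _ _ => by compute_degree

theorem one_sub_X_sq_dvd_prod_C_sub_X_sub (s : Finset ι) (u : ι → R) :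
    (1 - X ^ 2 : R[X]) ∣ ∏ i ∈ s, (C (u i) - X) - (-X) ^ #s * ∏ i ∈ s, (1 - C (u i) * X) := by
  induction s using Finset.cons_induction with
  | empty => simp
  | cons a s ha ih =>
    obtain ⟨H, hH⟩ := ih
    refine ⟨(C (u a) - X) * H + C (u a) * (-X) ^ #s * ∏ i ∈ s, (1 - C (u i) * X), ?_⟩
    rw [prod_cons, prod_cons, card_cons]
    linear_combination (C (u a) - X) * hH

theorem one_sub_X_sq_dvd_one_add_mul_neg_X_pow (n : ℕ) :
    (1 - X ^ 2 : R[X]) ∣ 1 + (if Odd n then X else -1) * (-X) ^ n := by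
  split_ifs with hn
  · obtain ⟨m, rfl⟩ := hn
    convert sub_dvd_pow_sub_pow (1 : R[X]) (X ^ 2) (m + 1) using 1
    rw [pow_succ, pow_mul, neg_sq]
    ring
  · obtain ⟨m, rfl⟩ := Nat.not_odd_iff_even.mp hn
    convert sub_dvd_pow_sub_pow (1 : R[X]) (X ^ 2) m using 1
    rw [← two_mul, pow_mul, neg_sq]
    ring

theorem one_sub_X_sq_dvd_prod_add (s : Finset ι) (u : ι → R) :
    (1 - X ^ 2 : R[X]) ∣ ∏ i ∈ s, (1 - C (u i) * X) +
      (if Odd #s then X else -1) * ∏ i ∈ s, (C (u i) - X) := by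
  convert dvd_add (dvd_mul_of_dvd_right (one_sub_X_sq_dvd_prod_C_sub_X_sub s u)
    (if Odd #s then X else -1)) (dvd_mul_of_dvd_left (one_sub_X_sq_dvd_one_add_mul_neg_X_pow #s)
    (∏ i ∈ s, (1 - C (u i) * X))) using 1
  ring

theorem natDegree_prod_add_le (s : Finset ι) (u : ι → R) :
    (∏ i ∈ s, (1 - C (u i) * X) +
      (if Odd #s then X else -1) * ∏ i ∈ s, (C (u i) - X)).natDegree ≤ #s + 1 := by
  have hP := natDegree_prod_one_sub_C_mul_X_le s u
  have hQ := natDegree_prod_C_sub_X_le s u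
  have hG : (if Odd #s then X else -1 : R[X]).natDegree ≤ 1 := by
    split_ifs <;> simp [natDegree_X_le]
  exact (natDegree_add_le _ _).trans (max_le (by omega) (natDegree_mul_le.trans (by omega)))

theorem degree_C_prod_mul_prod_C_sub_X_sub_prod_lt (s : Finset ι) (u : ι → R) :
    (C (∏ i ∈ s, u i) * ∏ i ∈ s, (C (u i) - X) - ∏ i ∈ s, (1 - C (u i) * X)).degree < #s := by
  rw [degree_lt_iff_coeff_zero]
  intro m hm
  rcases hm.eq_or_lt with rfl | hm
  · have hc : ∀ f : ι → R[X], (∀ i ∈ s, (f i).natDegree ≤ 1) →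
        (∏ i ∈ s, f i).coeff #s = ∏ i ∈ s, (f i).coeff 1 := fun f h => by
      simpa using coeff_prod_of_natDegree_le s f 1 h
    rw [coeff_sub, coeff_C_mul, hc _ fun _ _ => by compute_degree,
      hc _ fun _ _ => by compute_degree]
    simp [coeff_one, prod_neg]
    ring
  · rw [coeff_eq_zero_of_natDegree_lt]
    exact (natDegree_sub_le _ _).trans_lt
      (max_lt ((natDegree_C_mul_le _ _).trans_lt ((natDegree_prod_C_sub_X_le s u).trans_lt hm))
        ((natDegree_prod_one_sub_C_mul_X_le s u).trans_lt hm))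

theorem degree_lt_of_eq_one_sub_X_sq_mul [IsDomain R] {p H : R[X]} {n : ℕ}
    (hp : p.natDegree ≤ n + 1) (hH : p = (1 - X ^ 2) * H) : H.degree < n := by
  rcases eq_or_ne H 0 with rfl | hH0
  · simp
  have h2 : (1 - X ^ 2 : R[X]).natDegree = 2 := by compute_degree!
  rw [hH, natDegree_mul (by rintro h; simp [h] at h2) hH0, h2] at hp
  exact (natDegree_lt_iff_degree_lt hH0).mp (by omega)

end CommRing

section

variable {F : Type*} [Field F] {ι : Type*} [Fintype ι]

theorem sum_esymm_mul_sum_zpow_mul_eq_zero (u : ι → F) (hu0 : ∀ i, u i ≠ 0) (γ : ι → F)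
    (b : ℤ) :
    ∑ s ∈ range (Fintype.card ι + 1), (-1) ^ (Fintype.card ι - s) *
      (univ.val.map u).esymm (Fintype.card ι - s) * ∑ j, u j ^ ((s : ℤ) + b) * γ j = 0 := by
  have hcard : Multiset.card (univ.val.map u) = Fintype.card ι := by simp
  simp_rw [mul_sum, fun s j => zpow_add₀ (hu0 j) (s : ℤ) b]
  rw [sum_comm]
  refine sum_eq_zero fun j _ => ?_
  have h := (univ.val.map u).sum_range_esymm_mul_pow_eq_zero
    (Multiset.mem_map_of_mem u (mem_univ j))
  rw [hcard] at h
  rw [← mul_zero (u j ^ b * γ j), ← h, mul_sum]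
  refine sum_congr rfl fun s _ => ?_
  rw [zpow_natCast]
  ring

theorem one_sub_mul_sum_Icc_zpow {x y : F} (hx : x ≠ 0) (hy : y ≠ 0) (a : ℕ) :
    (1 - x * y) * ∑ i ∈ Icc 1 a, x ^ ((a : ℤ) - i) * y ^ (-(i : ℤ)) =
      y ^ (-(a : ℤ)) - x ^ (a : ℤ) := by
  induction a with
  | zero => simp
  | succ a ih =>
    rw [sum_Icc_succ_top (by omega), mul_add]
    have hshift : ∀ i ∈ Icc 1 a, x ^ ((↑(a + 1) : ℤ) - i) * y ^ (-(i : ℤ)) =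
        x * (x ^ ((a : ℤ) - i) * y ^ (-(i : ℤ))) := fun i _ => by
      rw [← mul_assoc, ← zpow_one_add₀ hx]; push_cast; ring_nf
    rw [sum_congr rfl hshift, ← mul_sum, mul_left_comm, ih]
    have hy' : y * y ^ (-((a : ℤ) + 1)) = y ^ (-(a : ℤ)) := by
      rw [← zpow_one_add₀ hy]; ring_nf
    push_cast
    rw [sub_self, zpow_zero, zpow_add_one₀ hx]
    linear_combination (-x) * hy'

theorem sum_Icc_mul_sub_eq_of_sum_mul_inv_one_sub_mul {u γ : ι → F} {e : F} (hu0 : ∀ i, u i ≠ 0)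
    (hu1 : ∀ i j, u i * u j ≠ 1)
    (hsum : ∀ j, ∑ k, γ k * (1 - u j * u k)⁻¹ = (1 - u j ^ 2)⁻¹ - e)
    {ω : ℤ → F} (hω : ∀ a, ω a = ∑ j, u j ^ a * γ j) (a : ℕ) :
    ∑ i ∈ Icc 1 a, (ω (a - i) * ω (-i) - ω (a - 2 * i)) = e * (ω a - ω (-a)) := by
  have geom : ∀ j k, ∑ i ∈ Icc 1 a, u j ^ ((a : ℤ) - i) * u k ^ (-(i : ℤ)) =
      (u k ^ (-(a : ℤ)) - u j ^ (a : ℤ)) * (1 - u j * u k)⁻¹ := fun j k => by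
    rw [eq_mul_inv_iff_mul_eq₀ (sub_ne_zero.mpr (hu1 j k).symm), mul_comm,
      one_sub_mul_sum_Icc_zpow (hu0 j) (hu0 k)]
  have hK : ∀ k, ∑ j, γ j * (1 - u j * u k)⁻¹ = (1 - u k ^ 2)⁻¹ - e := fun k => by
    simp_rw [mul_comm (u _) (u k)]; exact hsum k
  calc ∑ i ∈ Icc 1 a, (ω (a - i) * ω (-i) - ω (a - 2 * i))
      = ∑ j, ∑ k, γ j * γ k * ∑ i ∈ Icc 1 a, u j ^ ((a : ℤ) - i) * u k ^ (-(i : ℤ)) -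
          ∑ j, γ j * ∑ i ∈ Icc 1 a, u j ^ ((a : ℤ) - i) * u j ^ (-(i : ℤ)) := by
        have hsplit : ∀ j (i : ℕ),
            u j ^ ((a : ℤ) - 2 * i) = u j ^ ((a : ℤ) - i) * u j ^ (-(i : ℤ)) := fun j i => by
          rw [← zpow_add₀ (hu0 j)]; ring_nf
        simp_rw [sum_sub_distrib, hω, hsplit, sum_mul_sum, mul_sum]
        congr 1
        · rw [sum_comm]
          refine sum_congr rfl fun j _ => ?_
          rw [sum_comm]
          exact sum_congr rfl fun k _ => sum_congr rfl fun i _ => by ring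
        · rw [sum_comm]
          exact sum_congr rfl fun j _ => sum_congr rfl fun i _ => by ring
    _ = ∑ k, γ k * u k ^ (-(a : ℤ)) * ∑ j, γ j * (1 - u j * u k)⁻¹ -
          ∑ j, γ j * u j ^ (a : ℤ) * ∑ k, γ k * (1 - u j * u k)⁻¹ -
          ∑ j, γ j * ((u j ^ (-(a : ℤ)) - u j ^ (a : ℤ)) * (1 - u j * u j)⁻¹) := by
        simp_rw [geom, mul_sum]
        conv_rhs => enter [1, 1]; rw [sum_comm]
        simp_rw [← sum_sub_distrib]
        refine sum_congr rfl fun j _ => congrArg₂ _ (sum_congr rfl fun k _ => ?_) rfl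
        ring
    _ = e * (ω a - ω (-a)) := by
        simp_rw [hK, hsum, hω, mul_sub, mul_sum, ← sum_sub_distrib]
        refine sum_congr rfl fun j _ => ?_
        rw [← sq]
        ring

variable [DecidableEq ι]

/-- Up to the factor `u k ^ 2 - 1`, the residue at `z = u k` of `∏ l, (u l * z - 1) / (z - u l)`. -/
def residueWeight (u : ι → F) (k : ι) : F :=
  ∏ l ∈ univ.erase k, (u k * u l - 1) / (u k - u l)

theorem eval_eq_sum_residueWeight {u : ι → F} (hu0 : ∀ i, u i ≠ 0)
    (hu : Function.Injective u) {T : F[X]} (hT : T.degree < Fintype.card ι) {ψ : ι → F}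
    (hψ : ∀ k, T.eval (u k)⁻¹ = ψ k * ∏ l ∈ univ.erase k, (u l - (u k)⁻¹)) (x : F) :
    T.eval x = ∑ k, ψ k * residueWeight u k * ∏ l ∈ univ.erase k, (1 - u l * x) := by
  have hinj : Set.InjOn (fun k => (u k)⁻¹) (univ : Finset ι) :=
    fun _ _ _ _ h => hu (inv_injective h)
  rw [Lagrange.eq_interpolate (f := T) hinj (by simpa using hT), Lagrange.interpolate_apply,
    eval_finsetSum]
  refine sum_congr rfl fun k _ => ?_
  rw [eval_mul, eval_C, hψ, Lagrange.basis, eval_prod, residueWeight, mul_assoc, mul_assoc,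
    ← prod_mul_distrib, ← prod_mul_distrib]
  refine congrArg _ (prod_congr rfl fun l hl => ?_)
  have hlk : u l ≠ u k := hu.ne (mem_erase.mp hl).1
  simp only [Lagrange.basisDivisor, eval_mul, eval_C, eval_sub, eval_X]
  field_simp [hu0 k, hu0 l, sub_ne_zero.mpr hlk, sub_ne_zero.mpr hlk.symm]
  ring

theorem sum_mul_residueWeight_mul_inv_eq {u : ι → F} (hu0 : ∀ i, u i ≠ 0)
    (hu : Function.Injective u) (hu1 : ∀ i j, u i * u j ≠ 1) {T : F[X]}
    (hT : T.degree < Fintype.card ι) {ψ : ι → F}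
    (hψ : ∀ k, T.eval (u k)⁻¹ = ψ k * ∏ l ∈ univ.erase k, (u l - (u k)⁻¹)) (j : ι) :
    ∑ k, ψ k * residueWeight u k * (1 - u j * u k)⁻¹ = T.eval (u j) / ∏ l, (1 - u l * u j) := by
  rw [eval_eq_sum_residueWeight hu0 hu hT hψ, sum_div]
  refine sum_congr rfl fun k _ => ?_
  have hR : ∏ l ∈ univ.erase k, (1 - u l * u j) ≠ 0 :=
    prod_ne_zero_iff.mpr fun l _ => sub_ne_zero.mpr (hu1 l j).symm
  rw [← mul_prod_erase univ (fun l => 1 - u l * u j) (mem_univ k), mul_comm (u k) (u j),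
    mul_div_mul_right _ _ hR, div_eq_mul_inv]

theorem sum_residueWeight_mul_inv_eq_inv {u : ι → F} (hu0 : ∀ i, u i ≠ 0)
    (hu : Function.Injective u) (hu1 : ∀ i j, u i * u j ≠ 1) (j : ι) :
    ∑ k, (if Odd (Fintype.card ι) then 1 else -u k) * residueWeight u k * (1 - u j * u k)⁻¹ =
      (1 - u j ^ 2)⁻¹ := by
  obtain ⟨H, hH⟩ := one_sub_X_sq_dvd_prod_add univ u
  have evalH : ∀ x, (1 - x ^ 2) * H.eval x =
      ∏ l, (1 - u l * x) + (if Odd (Fintype.card ι) then x else -1) * ∏ l, (u l - x) := by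
    intro x
    have h := congrArg (eval x) hH
    rw [card_univ] at h
    split_ifs at h ⊢ <;> simpa [eval_prod] using h.symm
  have hdeg : H.degree < Fintype.card ι := by
    rw [← card_univ]
    exact degree_lt_of_eq_one_sub_X_sq_mul (natDegree_prod_add_le univ u) hH
  have hψ : ∀ k, H.eval (u k)⁻¹ =
      (if Odd (Fintype.card ι) then 1 else -u k) * ∏ l ∈ univ.erase k, (u l - (u k)⁻¹) := by
    intro k
    have hv : u k * (u k)⁻¹ = 1 := mul_inv_cancel₀ (hu0 k)
    have hv2 : 1 - (u k)⁻¹ ^ 2 ≠ 0 := by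
      rw [inv_pow, sub_ne_zero, ne_comm, inv_ne_one, sq]; exact hu1 k k
    have h := evalH (u k)⁻¹
    rw [prod_eq_zero (f := fun l => 1 - u l * (u k)⁻¹) (mem_univ k) (by simp [hv]), zero_add,
      ← mul_prod_erase univ (fun l => u l - (u k)⁻¹) (mem_univ k)] at h
    refine mul_left_cancel₀ hv2 ?_
    split_ifs at h ⊢
    · linear_combination h + (∏ l ∈ univ.erase k, (u l - (u k)⁻¹)) * hv
    · linear_combination h - (u k)⁻¹ * (∏ l ∈ univ.erase k, (u l - (u k)⁻¹)) * hv
  have hHj := evalH (u j)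
  rw [prod_eq_zero (f := fun l => u l - u j) (mem_univ j) (sub_self _), mul_zero,
    add_zero] at hHj
  have hPj : ∏ l, (1 - u l * u j) ≠ 0 :=
    prod_ne_zero_iff.mpr fun l _ => sub_ne_zero.mpr (hu1 l j).symm
  have hHj0 : H.eval (u j) ≠ 0 := fun h => hPj (by rw [← hHj, h, mul_zero])
  rw [sum_mul_residueWeight_mul_inv_eq hu0 hu hu1 hdeg hψ j, ← hHj, div_mul_cancel_right₀ hHj0]

theorem sum_residueWeight_mul_inv_eq_neg_one {u : ι → F} (hu0 : ∀ i, u i ≠ 0)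
    (hu : Function.Injective u) (hu1 : ∀ i j, u i * u j ≠ 1) (j : ι) :
    ∑ k, (u k ^ 2 - 1) * (∏ l ∈ univ.erase k, u l) * residueWeight u k * (1 - u j * u k)⁻¹ =
      -1 := by
  set T : F[X] := C (∏ l, u l) * ∏ l, (C (u l) - X) - ∏ l, (1 - C (u l) * X)
  have evalT : ∀ x, T.eval x = (∏ l, u l) * ∏ l, (u l - x) - ∏ l, (1 - u l * x) := by
    intro x; simp [T, eval_prod]
  have hψ : ∀ k, T.eval (u k)⁻¹ =
      (u k ^ 2 - 1) * (∏ l ∈ univ.erase k, u l) * ∏ l ∈ univ.erase k, (u l - (u k)⁻¹) := by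
    intro k
    have hv : u k * (u k)⁻¹ = 1 := mul_inv_cancel₀ (hu0 k)
    rw [evalT, prod_eq_zero (f := fun l => 1 - u l * (u k)⁻¹) (mem_univ k) (by simp [hv]),
      sub_zero, ← mul_prod_erase univ u (mem_univ k), ← mul_prod_erase univ (fun l => u l - (u k)⁻¹) (mem_univ k)]
    linear_combination (-(∏ l ∈ univ.erase k, u l) * ∏ l ∈ univ.erase k, (u l - (u k)⁻¹)) * hv
  have hPj : ∏ l, (1 - u l * u j) ≠ 0 :=
    prod_ne_zero_iff.mpr fun l _ => sub_ne_zero.mpr (hu1 l j).symm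
  rw [sum_mul_residueWeight_mul_inv_eq hu0 hu hu1
      (by rw [← card_univ]; exact degree_C_prod_mul_prod_C_sub_X_sub_prod_lt univ u) hψ j, evalT,
    prod_eq_zero (f := fun l => u l - u j) (mem_univ j) (sub_self _), mul_zero, zero_sub,
    neg_div, div_self hPj]

theorem sum_mul_inv_one_sub_mul_eq {u : ι → F} (hu0 : ∀ i, u i ≠ 0)
    (hu : Function.Injective u) (hu1 : ∀ i j, u i * u j ≠ 1) (e : F) {γ : ι → F}
    (hγ : ∀ i, γ i = ((if Odd (Fintype.card ι) then 1 else -u i) +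
      e * (u i ^ 2 - 1) * ∏ j ∈ univ.erase i, u j) * residueWeight u i) (j : ι) :
    ∑ k, γ k * (1 - u j * u k)⁻¹ = (1 - u j ^ 2)⁻¹ - e := by
  rw [← sum_residueWeight_mul_inv_eq_inv hu0 hu hu1 j, sub_eq_add_neg, ← mul_neg_one e,
    ← sum_residueWeight_mul_inv_eq_neg_one hu0 hu hu1 j, mul_sum, ← sum_add_distrib]
  refine sum_congr rfl fun k _ => ?_
  rw [hγ k]
  ring

end

theorem stmt_9_general {F : Type*} [Field F] {r : ℕ}
    (q ϱ : F) (hδ : q - q⁻¹ ≠ 0) (hϱ : ϱ ≠ 0)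
    (u : Fin r → F) (hu0 : ∀ i, u i ≠ 0) (huinj : Function.Injective u)
    (hu1 : ∀ i j, u i * u j ≠ 1)
    (γ : Fin r → F)
    (hγ : ∀ i, γ i =
      ((if Odd r then 1 else -u i) +
          (q - q⁻¹)⁻¹ * ϱ * (u i ^ 2 - 1) * ∏ j ∈ Finset.univ.erase i, u j) *
        ∏ j ∈ Finset.univ.erase i, (u i * u j - 1) / (u i - u j))
    (ω : ℤ → F) (hω : ∀ a : ℤ, ω a = ∑ j, u j ^ a * γ j)
    (σ : ℕ → F)
    (hσ : ∀ k : ℕ, σ k =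
      ∑ t ∈ Finset.powersetCard k (Finset.univ : Finset (Fin r)), ∏ i ∈ t, u i) :
    (∀ b : ℤ, ∑ s ∈ Finset.range (r + 1),
        (-1 : F) ^ (r - s) * σ (r - s) * ω ((s : ℤ) + b) = 0) ∧
    (∀ a : ℕ, ω (a : ℤ) = ω (-(a : ℤ)) +
        ∑ i ∈ Finset.Icc 1 a, ϱ⁻¹ * (q - q⁻¹) *
          (ω ((a : ℤ) - (i : ℤ)) * ω (-(i : ℤ)) - ω ((a : ℤ) - 2 * (i : ℤ)))) := by
  refine ⟨fun b => ?_, fun a => ?_⟩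
  · have h := sum_esymm_mul_sum_zpow_mul_eq_zero u hu0 γ b
    rw [Fintype.card_fin] at h
    simpa only [hσ, hω, Finset.esymm_map_val] using h
  · have hpf := sum_mul_inv_one_sub_mul_eq hu0 huinj hu1 ((q - q⁻¹)⁻¹ * ϱ)
      (by simpa only [Fintype.card_fin, residueWeight] using hγ)
    have hκ : ϱ⁻¹ * (q - q⁻¹) * ((q - q⁻¹)⁻¹ * ϱ) = 1 := by
      rw [mul_assoc, ← mul_assoc (q - q⁻¹), mul_inv_cancel₀ hδ, one_mul, inv_mul_cancel₀ hϱ]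
    rw [← mul_sum, sum_Icc_mul_sub_eq_of_sum_mul_inv_one_sub_mul hu0 hu1 hpf hω a]
    linear_combination (ω (-a) - ω a) * hκ

/-- The family `Ω = {ω_a : a ∈ ℤ}` is admissible:
(i) for every integer `b`, `∑_{s=0}^{r} (−1)^{r−s}·σ_{r−s}(u₁,…,u_r)·ω_{s+b} = 0`, where
`σ_i` is the `i`-th elementary symmetric polynomial of `u₁,…,u_r`; and
(ii) for every integer `a ≥ 0`,
`ω_a = ω_{−a} + ∑_{i=1}^{a} ϱ⁻¹δ(ω_{a−i}·ω_{−i} − ω_{a−2i})`. -/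
theorem stmt_9 {F : Type*} [Field F] {r : ℕ} (hr : 1 ≤ r)
    (q ϱ α : F) (hq : q ≠ 0) (hδ : q - q⁻¹ ≠ 0) (hϱ : ϱ ≠ 0)
    (u : Fin r → F) (hu0 : ∀ i, u i ≠ 0) (huinj : Function.Injective u)
    (hu1 : ∀ i j, u i * u j ≠ 1)
    (hα : if Odd r then α = 1 ∨ α = -1 else α = q⁻¹ ∨ α = -q)
    (hϱα : ϱ⁻¹ = α * ∏ l, u l)
    (γ : Fin r → F)
    (hγ : ∀ i, γ i =
      ((if Odd r then 1 else -u i) +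
          (q - q⁻¹)⁻¹ * ϱ * (u i ^ 2 - 1) * ∏ j ∈ Finset.univ.erase i, u j) *
        ∏ j ∈ Finset.univ.erase i, (u i * u j - 1) / (u i - u j))
    (ω : ℤ → F) (hω : ∀ a : ℤ, ω a = ∑ j, u j ^ a * γ j)
    (σ : ℕ → F)
    (hσ : ∀ k : ℕ, σ k =
      ∑ t ∈ Finset.powersetCard k (Finset.univ : Finset (Fin r)), ∏ i ∈ t, u i) :
    (∀ b : ℤ, ∑ s ∈ Finset.range (r + 1),
        (-1 : F) ^ (r - s) * σ (r - s) * ω ((s : ℤ) + b) = 0) ∧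
    (∀ a : ℕ, ω (a : ℤ) = ω (-(a : ℤ)) +
        ∑ i ∈ Finset.Icc 1 a, ϱ⁻¹ * (q - q⁻¹) *
          (ω ((a : ℤ) - (i : ℤ)) * ω (-(i : ℤ)) - ω ((a : ℤ) - 2 * (i : ℤ)))) :=
  stmt_9_general q ϱ hδ hϱ u hu0 huinj hu1 γ hγ ω hω σ hσ
end

section
/- Let λ be an r-multipartition of n − 2f (0 ≤ f ≤ ⌊n/2⌋), s ∈ T^{ud}_n(λ), 1 ≤ k < n, with s_{k−1} ≠ s_{k+1}, and set a_s(k) := δ·c_s(k+1)/(c_s(k+1) − c_s(k)) (well defined since c_s(k) ≠ c_s(k+1) under the genericity hypotheses). Then: (a) if the nodes s_k ⊖ s_{k−1} and s_{k+1} ⊖ s_k lie in different rows and different columns (so that the interchanged tableau s_k·s is defined, with k-th entry the unique multipartition t_k satisfying t_k ⊖ s_{k+1} = s_{k−1} ⊖ s_k and s_{k−1} ⊖ t_k = s_k ⊖ s_{k+1}), then c_s(k) = c_{s_k·s}(k+1), c_s(k+1) = c_{s_k·s}(k), and consequently a_{s_k·s}(k) = δ − a_s(k); (b) if these two nodes lie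 in the same row or in the same column (so that s_k·s is not defined), then a_s(k) ∈ {q, −q^{-1}}, and hence 1 − a_s(k)² + δ·a_s(k) = 0. -/
/-- A partition: a weakly decreasing sequence of non-negative integers that is
eventually zero (rows are indexed from `0`). -/
structure PartitionSeq where
  part : ℕ → ℕ
  antitone : Antitone part
  eventually_zero : ∃ N, ∀ i, N ≤ i → part i = 0

/-- The empty partition. -/
def emptyPartitionSeq : PartitionSeq :=
  ⟨fun _ => 0, fun _ _ _ => le_rfl, ⟨0, fun _ _ => rfl⟩⟩

/-- `mu` is obtained from `lam` by adding one box in row `i` (zero-based) of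
component `s`. -/
def AddBoxAt {r : ℕ} (lam mu : Fin r → PartitionSeq) (s : Fin r) (i : ℕ) : Prop :=
  (mu s).part i = (lam s).part i + 1 ∧
  (∀ i', i' ≠ i → (mu s).part i' = (lam s).part i') ∧
  (∀ s', s' ≠ s → mu s' = lam s')

/-- `t` is an `n`-updown `lam`-tableau. -/
def IsUpDownTableau {r : ℕ} (n : ℕ) (lam : Fin r → PartitionSeq)
    (t : ℕ → Fin r → PartitionSeq) : Prop :=
  t 0 = (fun _ => emptyPartitionSeq) ∧ t n = lam ∧
  ∀ k, k < n →
    (∃ s i, AddBoxAt (t k) (t (k + 1)) s i) ∨ (∃ s i, AddBoxAt (t (k + 1)) (t k) s i)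

/-- `c (k+1)` is the content `c_t(k+1)` of `k+1` in the updown tableau `t`. -/
def IsContent {F : Type*} [Field F] {r : ℕ} (q : F) (u : Fin r → F)
    (t : ℕ → Fin r → PartitionSeq) (c : ℕ → F) : Prop :=
  ∀ k : ℕ,
    (∀ s i, AddBoxAt (t k) (t (k + 1)) s i →
      c (k + 1) = u s * q ^ (2 * (((t k s).part i : ℤ) - (i : ℤ)))) ∧
    (∀ s i, AddBoxAt (t (k + 1)) (t k) s i →
      c (k + 1) = (u s)⁻¹ * q ^ (-2 * (((t (k + 1) s).part i : ℤ) - (i : ℤ))))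

/-- A node: a component `s`, a row `i` and a column `j` (both zero-based). -/
abbrev Node (r : ℕ) := Fin r × ℕ × ℕ

/-- `μ ⊖ ν = α`: the multipartitions `μ, ν` differ by exactly the node `α = (s, i, j)`
(zero-based row `i` and column `j`). -/
def DiffNode {r : ℕ} (lam mu : Fin r → PartitionSeq) (α : Node r) : Prop :=
  (AddBoxAt lam mu α.1 α.2.1 ∧ α.2.2 = (lam α.1).part α.2.1) ∨
  (AddBoxAt mu lam α.1 α.2.1 ∧ α.2.2 = (mu α.1).part α.2.1)

/-- Two nodes lie in the same row (same component and same row index). -/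
def SameRow {r : ℕ} (α β : Node r) : Prop := α.1 = β.1 ∧ α.2.1 = β.2.1

/-- Two nodes lie in the same column (same component and same column index). -/
def SameCol {r : ℕ} (α β : Node r) : Prop := α.1 = β.1 ∧ α.2.2 = β.2.2

/-! ### Auxiliary lemmas -/

lemma PartitionSeq.ext' {p q : PartitionSeq} (h : p.part = q.part) : p = q := by
  cases p; cases q; simp_all

noncomputable def psz (p : PartitionSeq) : ℕ := ∑ᶠ i, p.part i

lemma psz_eq (p : PartitionSeq) {T : Finset ℕ} (hT : ∀ m, m ∉ T → p.part m = 0) :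
    psz p = ∑ m ∈ T, p.part m := by
  refine finsum_eq_sum_of_support_subset _ ?_
  intro m hm
  by_contra h
  exact hm (hT m h)

lemma psz_T (p : PartitionSeq) (M : ℕ) : ∃ T : Finset ℕ,
    (∀ m, m ∉ T → p.part m = 0) ∧ Finset.range M ⊆ T := by
  obtain ⟨N, hN⟩ := p.eventually_zero
  refine ⟨Finset.range (max N M), fun m hm => hN m ?_, ?_⟩
  · simp only [Finset.mem_range, not_lt] at hm; omega
  · intro m hm; simp only [Finset.mem_range] at *; omega

lemma psz_lower (p : PartitionSeq) {i j : ℕ} (h : j + 1 ≤ p.part i) :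
    (i + 1) * (j + 1) ≤ psz p := by
  obtain ⟨T, hT, hsub⟩ := psz_T p (i + 1)
  rw [psz_eq p hT]
  calc (i + 1) * (j + 1) = ∑ _m ∈ Finset.range (i + 1), (j + 1) := by
        simp [Finset.sum_const, mul_comm]
    _ ≤ ∑ m ∈ Finset.range (i + 1), p.part m := by
        refine Finset.sum_le_sum fun m hm => ?_
        simp only [Finset.mem_range] at hm
        exact le_trans h (p.antitone (by omega))
    _ ≤ ∑ m ∈ T, p.part m := Finset.sum_le_sum_of_subset hsub

noncomputable def msz {r : ℕ} (X : Fin r → PartitionSeq) : ℕ := ∑ t, psz (X t)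

lemma psz_addBox {r : ℕ} {lam mu : Fin r → PartitionSeq} {s : Fin r} {i : ℕ}
    (h : AddBoxAt lam mu s i) : psz (mu s) = psz (lam s) + 1 := by
  obtain ⟨T1, hT1, hsub1⟩ := psz_T (lam s) (i + 1)
  obtain ⟨T2, hT2, _⟩ := psz_T (mu s) (i + 1)
  set T := T1 ∪ T2 with hT
  have hiT : i ∈ T := Finset.mem_union_left _ (hsub1 (by simp))
  have h1 : ∀ m, m ∉ T → (lam s).part m = 0 := fun m hm =>
    hT1 m (fun hc => hm (Finset.mem_union_left _ hc))
  have h2 : ∀ m, m ∉ T → (mu s).part m = 0 := fun m hm =>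
    hT2 m (fun hc => hm (Finset.mem_union_right _ hc))
  rw [psz_eq _ h1, psz_eq _ h2]
  rw [← Finset.sum_erase_add T _ hiT, ← Finset.sum_erase_add T ((lam s).part) hiT]
  have : ∑ m ∈ T.erase i, (mu s).part m = ∑ m ∈ T.erase i, (lam s).part m :=
    Finset.sum_congr rfl fun m hm => h.2.1 m (Finset.ne_of_mem_erase hm)
  rw [this, h.1]; omega

lemma msz_addBox {r : ℕ} {lam mu : Fin r → PartitionSeq} {s : Fin r} {i : ℕ}
    (h : AddBoxAt lam mu s i) : msz mu = msz lam + 1 := by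
  have key : ∀ t, psz (mu t) = psz (lam t) + (if t = s then 1 else 0) := by
    intro t
    by_cases ht : t = s
    · subst ht; simp [psz_addBox h]
    · rw [h.2.2 t ht]; simp [ht]
  unfold msz
  rw [Finset.sum_congr rfl (fun t _ => key t), Finset.sum_add_distrib]
  simp

lemma msz_le {r n : ℕ} {lam : Fin r → PartitionSeq} {S : ℕ → Fin r → PartitionSeq}
    (hS : IsUpDownTableau n lam S) : ∀ m, m ≤ n → msz (S m) ≤ m := by
  intro m
  induction m with
  | zero =>
    intro _
    rw [hS.1]
    simp [msz, psz, emptyPartitionSeq]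
  | succ m ih =>
    intro hm
    rcases hS.2.2 m (by omega) with ⟨s, i, h⟩ | ⟨s, i, h⟩
    · rw [msz_addBox h]; have := ih (by omega); omega
    · have := msz_addBox h; have := ih (by omega); omega

lemma box_bound {r n : ℕ} {lam : Fin r → PartitionSeq} {S : ℕ → Fin r → PartitionSeq}
    (hS : IsUpDownTableau n lam S) {m : ℕ} (hm : m ≤ n) (t : Fin r) {i j : ℕ}
    (h : j + 1 ≤ (S m t).part i) : |(j : ℤ) - (i : ℤ)| ≤ (n : ℤ) - 1 := by
  have h1 : (i + 1) * (j + 1) ≤ psz (S m t) := psz_lower _ h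
  have h2 : psz (S m t) ≤ msz (S m) :=
    Finset.single_le_sum (f := fun t => psz (S m t)) (fun _ _ => Nat.zero_le _)
      (Finset.mem_univ t)
  have h3 := msz_le hS m hm
  have h4 : i + j + 1 ≤ n := by nlinarith
  rw [abs_le]; constructor <;> omega

section Alg
variable {F : Type*} [Field F]

lemma zpow_two_mul' (q : F) (d : ℤ) : q ^ (2 * d) = (q ^ 2) ^ d := by
  rw [← zpow_natCast q 2, ← zpow_mul]
  norm_num

lemma zpow_natAbs_eq_one {x : F} {d : ℤ} (h : x ^ d = 1) : x ^ d.natAbs = 1 := by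
  rcases Int.natAbs_eq d with h' | h'
  · rw [h', zpow_natCast] at h; exact h
  · rw [h', zpow_neg, inv_eq_one, zpow_natCast] at h; exact h

lemma ne_addadd {r n : ℕ} {q : F} {u : Fin r → F} (hq : q ≠ 0) (hu : ∀ i, u i ≠ 0)
    (horder : ∀ m : ℕ, 1 ≤ m → m ≤ 2 * n → (q ^ 2) ^ m ≠ 1)
    (hgen : ∀ d : ℤ,
      ((∃ i j, i ≠ j ∧ (u i * u j = q ^ (2 * d) ∨ u i * (u j)⁻¹ = q ^ (2 * d))) ∨
        (∃ i, u i = q ^ d ∨ u i = -(q ^ d))) → (2 * n : ℤ) ≤ |d|)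
    {s s' : Fin r} {da db : ℤ}
    (hda : |da| ≤ (n : ℤ) - 1) (hdb : |db| ≤ (n : ℤ) - 1) (hd : s = s' → da ≠ db) :
    u s * q ^ (2 * da) ≠ u s' * q ^ (2 * db) := by
  intro heq
  by_cases hs : s = s'
  · have hd' := hd hs
    subst hs
    have h1 : q ^ (2 * da) = q ^ (2 * db) := mul_left_cancel₀ (hu s) heq
    have h2 : q ^ (2 * (da - db)) = 1 := by
      rw [show (2:ℤ) * (da - db) = 2 * da + -(2 * db) by ring, zpow_add₀ hq, h1, zpow_neg,
        mul_inv_cancel₀ (zpow_ne_zero _ hq)]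
    rw [zpow_two_mul'] at h2
    have h4 : (q ^ 2) ^ (da - db).natAbs = 1 := zpow_natAbs_eq_one h2
    have h5 : |da - db| ≤ 2 * (n : ℤ) - 2 := by
      calc |da - db| ≤ |da| + |db| := abs_sub da db
        _ ≤ 2 * (n : ℤ) - 2 := by omega
    rw [Int.abs_eq_natAbs] at h5
    refine horder (da - db).natAbs (by omega) (by omega) h4
  · have hcomb : q ^ (2 * db) * (q ^ (2 * da))⁻¹ = q ^ (2 * (db - da)) := by
      rw [← zpow_neg, ← zpow_add₀ hq, show (2:ℤ) * db + -(2 * da) = 2 * (db - da) by ring]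
    have key : u s * (u s')⁻¹ = q ^ (2 * (db - da)) := by
      rw [← hcomb]
      have h1 : q ^ (2 * da) ≠ 0 := zpow_ne_zero _ hq
      have h2 : u s' ≠ 0 := hu s'
      field_simp
      linear_combination heq
    have := hgen (db - da) (Or.inl ⟨s, s', hs, Or.inr key⟩)
    have h5 : |db - da| ≤ 2 * (n : ℤ) - 2 := by
      calc |db - da| ≤ |db| + |da| := abs_sub db da
        _ ≤ 2 * (n : ℤ) - 2 := by omega
    omega

lemma ne_addrem {r n : ℕ} {q : F} {u : Fin r → F} (hq : q ≠ 0) (hu : ∀ i, u i ≠ 0)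
    (hgen : ∀ d : ℤ,
      ((∃ i j, i ≠ j ∧ (u i * u j = q ^ (2 * d) ∨ u i * (u j)⁻¹ = q ^ (2 * d))) ∨
        (∃ i, u i = q ^ d ∨ u i = -(q ^ d))) → (2 * n : ℤ) ≤ |d|)
    {s s' : Fin r} {da db : ℤ}
    (hda : |da| ≤ (n : ℤ) - 1) (hdb : |db| ≤ (n : ℤ) - 1) :
    u s * q ^ (2 * da) ≠ (u s' * q ^ (2 * db))⁻¹ := by
  intro heq
  have habs : |(-(da + db))| ≤ 2 * (n : ℤ) - 2 := by
    rw [abs_neg]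
    calc |da + db| ≤ |da| + |db| := abs_add_le da db
      _ ≤ 2 * (n : ℤ) - 2 := by omega
  have h0 : u s * q ^ (2 * da) * (u s' * q ^ (2 * db)) = 1 := by
    rw [heq, inv_mul_cancel₀ (mul_ne_zero (hu s') (zpow_ne_zero _ hq))]
  have hprod : u s * u s' = q ^ (2 * (-(da + db))) := by
    have e : q ^ (2 * (-(da + db))) = (q ^ (2 * da) * q ^ (2 * db))⁻¹ := by
      rw [show (2:ℤ) * (-(da + db)) = -(2 * da + 2 * db) by ring, zpow_neg, zpow_add₀ hq]
    rw [e]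
    have h1 : q ^ (2 * da) ≠ 0 := zpow_ne_zero _ hq
    have h2 : q ^ (2 * db) ≠ 0 := zpow_ne_zero _ hq
    field_simp
    linear_combination h0
  by_cases hs : s = s'
  · subst hs
    have hX : (u s * q ^ (da + db)) * (u s * q ^ (da + db)) = 1 := by
      calc (u s * q ^ (da + db)) * (u s * q ^ (da + db))
          = (u s * u s) * (q ^ (da + db) * q ^ (da + db)) := by ring
        _ = 1 := by
            rw [hprod, ← zpow_add₀ hq, ← zpow_add₀ hq,
              show (2:ℤ) * (-(da + db)) + ((da + db) + (da + db)) = 0 by ring, zpow_zero]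
    have hcases : u s * q ^ (da + db) = 1 ∨ u s * q ^ (da + db) = -1 := by
      have hz : (u s * q ^ (da + db) - 1) * (u s * q ^ (da + db) + 1) = 0 := by
        linear_combination hX
      rcases mul_eq_zero.1 hz with h | h
      · exact Or.inl (sub_eq_zero.1 h)
      · exact Or.inr (eq_neg_of_add_eq_zero_left h)
    have hus : u s = q ^ (-(da + db)) ∨ u s = -(q ^ (-(da + db))) := by
      have hq0 : q ^ (da + db) ≠ 0 := zpow_ne_zero _ hq
      rcases hcases with h | h
      · left; rw [zpow_neg]; exact eq_inv_of_mul_eq_one_left h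
      · right; rw [zpow_neg]
        field_simp
        linear_combination h
    have := hgen (-(da + db)) (Or.inr ⟨s, hus⟩)
    omega
  · have := hgen (-(da + db)) (Or.inl ⟨s, s', hs, Or.inl hprod⟩)
    omega

lemma swap_arith (δ X Y : F) (h : X ≠ Y) :
    δ * X / (X - Y) = δ - δ * Y / (Y - X) := by
  have h1 : X - Y ≠ 0 := sub_ne_zero.mpr h
  have h2 : Y - X ≠ 0 := sub_ne_zero.mpr (Ne.symm h)
  field_simp
  ring

lemma qshift {q : F} (hq : q ≠ 0) (w : F) (da db : ℤ) (h : db = da + 1) :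
    w * q ^ (2 * db) = (w * q ^ (2 * da)) * q ^ 2 := by
  subst h
  rw [show (2:ℤ) * (da + 1) = 2 * da + ((2:ℕ) : ℤ) by push_cast; ring, zpow_add₀ hq,
    zpow_natCast]
  ring

lemma qshift' {q : F} (hq : q ≠ 0) (w : F) (da db : ℤ) (h : db = da - 1) :
    w * q ^ (2 * db) = (w * q ^ (2 * da)) * (q ^ 2)⁻¹ := by
  subst h
  rw [show (2:ℤ) * (da - 1) = 2 * da + -((2:ℕ) : ℤ) by push_cast; ring, zpow_add₀ hq,
    zpow_neg, zpow_natCast]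
  ring

lemma qshift_inv {q : F} (hq : q ≠ 0) (w : F) (da db : ℤ) (h : db = da - 1) :
    (w * q ^ (2 * db))⁻¹ = (w * q ^ (2 * da))⁻¹ * q ^ 2 := by
  rw [qshift' hq w da db h, mul_inv, inv_inv]

lemma qshift_inv' {q : F} (hq : q ≠ 0) (w : F) (da db : ℤ) (h : db = da + 1) :
    (w * q ^ (2 * db))⁻¹ = (w * q ^ (2 * da))⁻¹ * (q ^ 2)⁻¹ := by
  rw [qshift hq w da db h, mul_inv]

lemma b_pos {q x : F} (hq : q ≠ 0) (hx : x ≠ 0) (h2 : q ^ 2 ≠ 1) :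
    (q - q⁻¹) * (x * q ^ 2) / (x * q ^ 2 - x) = q := by
  have hd : x * q ^ 2 - x = x * (q ^ 2 - 1) := by ring
  rw [hd, div_eq_iff (mul_ne_zero hx (sub_ne_zero.mpr h2))]
  field_simp

lemma b_neg {q x : F} (hq : q ≠ 0) (hx : x ≠ 0) (h2 : q ^ 2 ≠ 1) :
    (q - q⁻¹) * (x * (q ^ 2)⁻¹) / (x * (q ^ 2)⁻¹ - x) = -q⁻¹ := by
  have hq2 : q ^ 2 ≠ 0 := pow_ne_zero _ hq
  have hd : x * (q ^ 2)⁻¹ - x ≠ 0 := by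
    intro h
    apply h2
    have h' : x * (q ^ 2)⁻¹ = x * 1 := by rw [mul_one]; exact sub_eq_zero.1 h
    have := mul_left_cancel₀ hx h'
    rwa [inv_eq_one] at this
  rw [div_eq_iff hd]
  field_simp
  ring

lemma b_final_pos {q x y : F} (hq : q ≠ 0) (hx : x ≠ 0) (h2 : q ^ 2 ≠ 1)
    (hy : y = x * q ^ 2) :
    ((q - q⁻¹) * y / (y - x) = q ∨ (q - q⁻¹) * y / (y - x) = -q⁻¹) ∧
      1 - ((q - q⁻¹) * y / (y - x)) ^ 2 + (q - q⁻¹) * ((q - q⁻¹) * y / (y - x)) = 0 := by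
  subst hy
  have hb := b_pos hq hx h2
  rw [hb]
  refine ⟨Or.inl rfl, ?_⟩
  field_simp
  ring

lemma b_final_neg {q x y : F} (hq : q ≠ 0) (hx : x ≠ 0) (h2 : q ^ 2 ≠ 1)
    (hy : y = x * (q ^ 2)⁻¹) :
    ((q - q⁻¹) * y / (y - x) = q ∨ (q - q⁻¹) * y / (y - x) = -q⁻¹) ∧
      1 - ((q - q⁻¹) * y / (y - x)) ^ 2 + (q - q⁻¹) * ((q - q⁻¹) * y / (y - x)) = 0 := by
  subst hy
  have hb := b_neg hq hx h2
  rw [hb]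
  refine ⟨Or.inr rfl, ?_⟩
  field_simp
  ring

end Alg

section Comb
variable {r : ℕ} {A B C : Fin r → PartitionSeq} {s : Fin r} {i i' : ℕ}

lemma addbox_pos {X Y : Fin r → PartitionSeq} {t : Fin r} {m : ℕ} (h : AddBoxAt X Y t m)
    (hne : (X s).part i ≠ (Y s).part i) : t = s ∧ m = i := by
  by_cases hs : t = s
  · subst hs
    by_cases hm : m = i
    · exact ⟨rfl, hm⟩
    · exact absurd (h.2.1 i (fun hh => hm hh.symm)).symm hne
  · exact absurd (congrArg (fun p => p.part i)
      (h.2.2 s (fun hh => hs hh.symm))).symm hne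

lemma diff_pos {β : Node r} (h : DiffNode A B β) (hne : (A s).part i ≠ (B s).part i) :
    β.1 = s ∧ β.2.1 = i := by
  rcases h with ⟨h1, _⟩ | ⟨h1, _⟩
  · exact addbox_pos h1 hne
  · exact addbox_pos h1 (Ne.symm hne)

lemma addadd_diag (h1 : AddBoxAt A B s i) (h2 : AddBoxAt B C s i')
    (hd : ((A s).part i : ℤ) - i = ((B s).part i' : ℤ) - i') : False := by
  obtain ⟨e1, e2, _⟩ := h1
  obtain ⟨f1, f2, _⟩ := h2
  rcases lt_trichotomy i' i with h | h | h
  · have := (B s).antitone (le_of_lt h)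
    omega
  · subst h; omega
  · have hCi : (C s).part i = (B s).part i := f2 i (by omega)
    have := (C s).antitone (le_of_lt h)
    omega

lemma remrem_diag (h1 : AddBoxAt B A s i) (h2 : AddBoxAt C B s i')
    (hd : ((B s).part i : ℤ) - i = ((C s).part i' : ℤ) - i') : False := by
  obtain ⟨e1, e2, _⟩ := h1
  obtain ⟨f1, f2, _⟩ := h2
  rcases lt_trichotomy i' i with h | h | h
  · have hCi : (C s).part i = (B s).part i := (f2 i (by omega)).symm
    have := (C s).antitone (le_of_lt h)
    omega
  · subst h; omega
  · have := (B s).antitone (le_of_lt h)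
    omega

lemma addadd_col (h1 : AddBoxAt A B s i) (h2 : AddBoxAt B C s i')
    (hcol : (B s).part i' = (A s).part i) : i' = i + 1 := by
  obtain ⟨e1, e2, _⟩ := h1
  obtain ⟨f1, f2, _⟩ := h2
  rcases lt_trichotomy i' i with h | h | h
  · have := (B s).antitone (le_of_lt h)
    omega
  · subst h; omega
  · by_contra hne
    have hii : i + 1 < i' := by omega
    have c1 : (C s).part (i' - 1) = (B s).part (i' - 1) := f2 _ (by omega)
    have c2 : (B s).part (i' - 1) = (A s).part (i' - 1) := e2 _ (by omega)
    have c3 := (A s).antitone (show i ≤ i' - 1 by omega)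
    have c4 := (C s).antitone (show i' - 1 ≤ i' by omega)
    omega

lemma remrem_col (h1 : AddBoxAt B A s i) (h2 : AddBoxAt C B s i')
    (hcol : (C s).part i' = (B s).part i) : i = i' + 1 := by
  obtain ⟨e1, e2, _⟩ := h1
  obtain ⟨f1, f2, _⟩ := h2
  rcases lt_trichotomy i i' with h | h | h
  · have := (B s).antitone (le_of_lt h)
    omega
  · subst h; omega
  · by_contra hne
    have hii : i' + 1 < i := by omega
    have c1 : (A s).part (i' + 1) = (B s).part (i' + 1) := e2 _ (by omega)
    have c2 : (B s).part (i' + 1) = (C s).part (i' + 1) := f2 _ (by omega)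
    have c3 := (A s).antitone (show i' + 1 ≤ i by omega)
    have c4 := (C s).antitone (show i' ≤ i' + 1 by omega)
    omega

lemma addrem_eq (h1 : AddBoxAt A B s i) (h2 : AddBoxAt C B s i') (hii : i' = i) :
    A = C := by
  subst hii
  obtain ⟨e1, e2, e3⟩ := h1
  obtain ⟨f1, f2, f3⟩ := h2
  funext t
  apply PartitionSeq.ext'
  funext m
  by_cases ht : t = s
  · subst ht
    by_cases hm : m = i'
    · subst hm; omega
    · rw [← e2 m hm, f2 m hm]
  · rw [← congrArg (fun p => p.part m) (e3 t ht),
      congrArg (fun p => p.part m) (f3 t ht)]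

lemma addrem_colrow (h1 : AddBoxAt A B s i) (h2 : AddBoxAt C B s i')
    (hcol : (C s).part i' = (A s).part i) : i' = i := by
  obtain ⟨e1, e2, _⟩ := h1
  obtain ⟨f1, f2, _⟩ := h2
  rcases lt_trichotomy i' i with h | h | h
  · have c1 : (C s).part i = (B s).part i := (f2 i (by omega)).symm
    have := (C s).antitone (le_of_lt h)
    omega
  · exact h
  · have c1 : (A s).part i' = (B s).part i' := (e2 i' (by omega)).symm
    have := (A s).antitone (le_of_lt h)
    omega

lemma remadd_eq (h1 : AddBoxAt B A s i) (h2 : AddBoxAt B C s i') (hii : i' = i) :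
    A = C := by
  subst hii
  obtain ⟨e1, e2, e3⟩ := h1
  obtain ⟨f1, f2, f3⟩ := h2
  funext t
  apply PartitionSeq.ext'
  funext m
  by_cases ht : t = s
  · subst ht
    by_cases hm : m = i'
    · subst hm; omega
    · rw [e2 m hm, ← f2 m hm]
  · rw [congrArg (fun p => p.part m) (e3 t ht),
      ← congrArg (fun p => p.part m) (f3 t ht)]

lemma remadd_colrow (h1 : AddBoxAt B A s i) (h2 : AddBoxAt B C s i')
    (hcol : (B s).part i' = (B s).part i) : i' = i := by
  obtain ⟨e1, e2, _⟩ := h1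
  obtain ⟨f1, f2, _⟩ := h2
  rcases lt_trichotomy i' i with h | h | h
  · have c1 : (A s).part i' = (B s).part i' := e2 i' (by omega)
    have := (A s).antitone (le_of_lt h)
    omega
  · exact h
  · have c1 : (C s).part i = (B s).part i := f2 i (by omega)
    have := (C s).antitone (le_of_lt h)
    omega

end Comb

section Content
variable {F : Type*} [Field F] {r : ℕ} {q : F} {u : Fin r → F}
  {t : ℕ → Fin r → PartitionSeq} {c : ℕ → F}

lemma content_add (hc : IsContent q u t c) {m : ℕ} {α : Node r}
    (h : AddBoxAt (t m) (t (m + 1)) α.1 α.2.1) (hj : α.2.2 = (t m α.1).part α.2.1) :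
    c (m + 1) = u α.1 * q ^ (2 * ((α.2.2 : ℤ) - (α.2.1 : ℤ))) := by
  rw [(hc m).1 α.1 α.2.1 h, ← hj]

lemma content_rem (hc : IsContent q u t c) {m : ℕ} {α : Node r}
    (h : AddBoxAt (t (m + 1)) (t m) α.1 α.2.1) (hj : α.2.2 = (t (m + 1) α.1).part α.2.1) :
    c (m + 1) = (u α.1 * q ^ (2 * ((α.2.2 : ℤ) - (α.2.1 : ℤ))))⁻¹ := by
  rw [(hc m).2 α.1 α.2.1 h, ← hj, mul_inv, ← zpow_neg, neg_mul]

end Content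

/-- Generic parameters, `S` an `n`-updown `λ`-tableau with contents
`c`, `1 ≤ k < n`, `S_{k−1} ≠ S_{k+1}`, and `a := δ·c(k+1)/(c(k+1) − c(k))`.
(a) If the nodes `α = S_k ⊖ S_{k−1}` and `β = S_{k+1} ⊖ S_k` lie in different rows and
different columns, then for the interchanged tableau `S' = s_k·S` (equal to `S` away
from `k`, with `S'_k ⊖ S_{k+1} = α` and `S_{k−1} ⊖ S'_k = β`) with contents `c'` one has
`c(k) = c'(k+1)`, `c(k+1) = c'(k)` and `δ·c'(k+1)/(c'(k+1) − c'(k)) = δ − a`.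
(b) If `α` and `β` lie in the same row or in the same column, then `a ∈ {q, −q⁻¹}`,
hence `1 − a² + δ·a = 0`. -/
theorem stmt_13 {F : Type*} [Field F] {r n : ℕ}
    (q : F) (u : Fin r → F) (hq : q ≠ 0) (hu : ∀ i, u i ≠ 0)
    (horder : ∀ m : ℕ, 1 ≤ m → m ≤ 2 * n → (q ^ 2) ^ m ≠ 1)
    (hgen : ∀ d : ℤ,
      ((∃ i j, i ≠ j ∧ (u i * u j = q ^ (2 * d) ∨ u i * (u j)⁻¹ = q ^ (2 * d))) ∨
        (∃ i, u i = q ^ d ∨ u i = -(q ^ d))) → (2 * n : ℤ) ≤ |d|)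
    (lam : Fin r → PartitionSeq)
    (hsize : ∃ f : ℕ, 2 * f ≤ n ∧ (∑ s, ∑ᶠ i, (lam s).part i) = n - 2 * f)
    (S : ℕ → Fin r → PartitionSeq) (hS : IsUpDownTableau n lam S)
    (c : ℕ → F) (hc : IsContent q u S c)
    (k : ℕ) (hk1 : 1 ≤ k) (hkn : k < n)
    (hne : S (k - 1) ≠ S (k + 1)) :
    (∀ (S' : ℕ → Fin r → PartitionSeq) (c' : ℕ → F) (α β : Node r),
      DiffNode (S (k - 1)) (S k) α → DiffNode (S k) (S (k + 1)) β →
      ¬ SameRow α β → ¬ SameCol α β →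
      (∀ j, j ≠ k → S' j = S j) →
      DiffNode (S' k) (S (k + 1)) α → DiffNode (S (k - 1)) (S' k) β →
      IsContent q u S' c' →
      c k = c' (k + 1) ∧ c (k + 1) = c' k ∧
        (q - q⁻¹) * c' (k + 1) / (c' (k + 1) - c' k) =
          (q - q⁻¹) - (q - q⁻¹) * c (k + 1) / (c (k + 1) - c k)) ∧
    (∀ α β : Node r,
      DiffNode (S (k - 1)) (S k) α → DiffNode (S k) (S (k + 1)) β →
      (SameRow α β ∨ SameCol α β) →
      ((q - q⁻¹) * c (k + 1) / (c (k + 1) - c k) = q ∨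
        (q - q⁻¹) * c (k + 1) / (c (k + 1) - c k) = -q⁻¹) ∧
      1 - ((q - q⁻¹) * c (k + 1) / (c (k + 1) - c k)) ^ 2 +
        (q - q⁻¹) * ((q - q⁻¹) * c (k + 1) / (c (k + 1) - c k)) = 0) := by
  clear hsize
  obtain ⟨K, rfl⟩ : ∃ K, k = K + 1 := ⟨k - 1, by omega⟩
  simp only [Nat.add_sub_cancel] at hne ⊢
  have hn1 : 1 ≤ n := by omega
  have hq2 : q ^ 2 ≠ 1 := by
    have := horder 1 (by omega) (by omega)
    simpa using this
  constructor
  · -- part (a)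
    intro S' c' α β hα hβ hrow hcol hS'eq hα' hβ' hc'
    have e0 : S' K = S K := hS'eq K (by omega)
    have e2 : S' (K + 1 + 1) = S (K + 1 + 1) := hS'eq _ (by omega)
    -- direction matching for α
    have hdirα :
        (AddBoxAt (S K) (S (K + 1)) α.1 α.2.1 ∧ α.2.2 = (S K α.1).part α.2.1 ∧
          AddBoxAt (S' (K + 1)) (S (K + 1 + 1)) α.1 α.2.1 ∧
          α.2.2 = (S' (K + 1) α.1).part α.2.1) ∨
        (AddBoxAt (S (K + 1)) (S K) α.1 α.2.1 ∧ α.2.2 = (S (K + 1) α.1).part α.2.1 ∧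
          AddBoxAt (S (K + 1 + 1)) (S' (K + 1)) α.1 α.2.1 ∧
          α.2.2 = (S (K + 1 + 1) α.1).part α.2.1) := by
      rcases hα with ⟨ha, hja⟩ | ⟨ha, hja⟩ <;> rcases hα' with ⟨ha', hja'⟩ | ⟨ha', hja'⟩
      · exact Or.inl ⟨ha, hja, ha', hja'⟩
      · exfalso
        have h1 := ha.1
        have hnep : (S (K + 1) α.1).part α.2.1 ≠ (S (K + 1 + 1) α.1).part α.2.1 := by
          omega
        obtain ⟨hb1, hb2⟩ := diff_pos hβ hnep
        exact hrow ⟨hb1.symm, hb2.symm⟩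
      · exfalso
        have h1 := ha.1
        have h2 := ha'.1
        have hnep : (S (K + 1) α.1).part α.2.1 ≠ (S (K + 1 + 1) α.1).part α.2.1 := by
          omega
        obtain ⟨hb1, hb2⟩ := diff_pos hβ hnep
        exact hrow ⟨hb1.symm, hb2.symm⟩
      · exact Or.inr ⟨ha, hja, ha', hja'⟩
    -- direction matching for β
    have hdirβ :
        (AddBoxAt (S (K + 1)) (S (K + 1 + 1)) β.1 β.2.1 ∧
          β.2.2 = (S (K + 1) β.1).part β.2.1 ∧
          AddBoxAt (S K) (S' (K + 1)) β.1 β.2.1 ∧ β.2.2 = (S K β.1).part β.2.1) ∨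
        (AddBoxAt (S (K + 1 + 1)) (S (K + 1)) β.1 β.2.1 ∧
          β.2.2 = (S (K + 1 + 1) β.1).part β.2.1 ∧
          AddBoxAt (S' (K + 1)) (S K) β.1 β.2.1 ∧
          β.2.2 = (S' (K + 1) β.1).part β.2.1) := by
      rcases hβ with ⟨hb, hjb⟩ | ⟨hb, hjb⟩ <;> rcases hβ' with ⟨hb', hjb'⟩ | ⟨hb', hjb'⟩
      · exact Or.inl ⟨hb, hjb, hb', hjb'⟩
      · exfalso
        have h1 := hb.1
        have h2 := hb'.1
        have hnep : (S K β.1).part β.2.1 ≠ (S (K + 1) β.1).part β.2.1 := by omega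
        obtain ⟨hb1, hb2⟩ := diff_pos hα hnep
        exact hrow ⟨hb1, hb2⟩
      · exfalso
        have h1 := hb.1
        have h2 := hb'.1
        have hnep : (S K β.1).part β.2.1 ≠ (S (K + 1) β.1).part β.2.1 := by omega
        obtain ⟨hb1, hb2⟩ := diff_pos hα hnep
        exact hrow ⟨hb1, hb2⟩
      · exact Or.inr ⟨hb, hjb, hb', hjb'⟩
    clear hα hβ hα' hβ'
    rcases hdirα with ⟨ha, hja, ha', hja'⟩ | ⟨ha, hja, ha', hja'⟩ <;>
      rcases hdirβ with ⟨hb, hjb, hb', hjb'⟩ | ⟨hb, hjb, hb', hjb'⟩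
    · -- α add, β add
      have hck : c (K + 1) = u α.1 * q ^ (2 * ((α.2.2 : ℤ) - (α.2.1 : ℤ))) :=
        content_add hc ha hja
      have hck' : c' (K + 1 + 1) = u α.1 * q ^ (2 * ((α.2.2 : ℤ) - (α.2.1 : ℤ))) :=
        content_add hc' (by rw [e2]; exact ha') hja'
      have hck1 : c (K + 1 + 1) = u β.1 * q ^ (2 * ((β.2.2 : ℤ) - (β.2.1 : ℤ))) :=
        content_add hc hb hjb
      have hck1' : c' (K + 1) = u β.1 * q ^ (2 * ((β.2.2 : ℤ) - (β.2.1 : ℤ))) :=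
        content_add hc' (m := K) (by rw [e0]; exact hb') (by rw [e0]; exact hjb')
      have hda : |(α.2.2 : ℤ) - (α.2.1 : ℤ)| ≤ (n : ℤ) - 1 := by
        have h1 := ha.1
        exact box_bound hS (show K + 1 ≤ n by omega) α.1
          (show α.2.2 + 1 ≤ (S (K + 1) α.1).part α.2.1 by omega)
      have hdb : |(β.2.2 : ℤ) - (β.2.1 : ℤ)| ≤ (n : ℤ) - 1 := by
        have h1 := hb.1
        exact box_bound hS (show K + 1 + 1 ≤ n by omega) β.1
          (show β.2.2 + 1 ≤ (S (K + 1 + 1) β.1).part β.2.1 by omega)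
      have hXY : u α.1 * q ^ (2 * ((α.2.2 : ℤ) - (α.2.1 : ℤ))) ≠
          u β.1 * q ^ (2 * ((β.2.2 : ℤ) - (β.2.1 : ℤ))) := by
        refine ne_addadd hq hu horder hgen hda hdb ?_
        intro hcomp hdd
        rw [← hcomp] at hb hjb
        exact addadd_diag ha hb (by rw [← hja, ← hjb]; exact hdd)
      exact ⟨by rw [hck, hck'], by rw [hck1, hck1'],
        by rw [hck, hck1, hck', hck1']; exact swap_arith _ _ _ hXY⟩
    · -- α add, β rem
      have hck : c (K + 1) = u α.1 * q ^ (2 * ((α.2.2 : ℤ) - (α.2.1 : ℤ))) :=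
        content_add hc ha hja
      have hck' : c' (K + 1 + 1) = u α.1 * q ^ (2 * ((α.2.2 : ℤ) - (α.2.1 : ℤ))) :=
        content_add hc' (by rw [e2]; exact ha') hja'
      have hck1 : c (K + 1 + 1) = (u β.1 * q ^ (2 * ((β.2.2 : ℤ) - (β.2.1 : ℤ))))⁻¹ :=
        content_rem hc hb hjb
      have hck1' : c' (K + 1) = (u β.1 * q ^ (2 * ((β.2.2 : ℤ) - (β.2.1 : ℤ))))⁻¹ :=
        content_rem hc' (m := K) (by rw [e0]; exact hb') hjb'
      have hda : |(α.2.2 : ℤ) - (α.2.1 : ℤ)| ≤ (n : ℤ) - 1 := by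
        have h1 := ha.1
        exact box_bound hS (show K + 1 ≤ n by omega) α.1
          (show α.2.2 + 1 ≤ (S (K + 1) α.1).part α.2.1 by omega)
      have hdb : |(β.2.2 : ℤ) - (β.2.1 : ℤ)| ≤ (n : ℤ) - 1 := by
        have h1 := hb.1
        exact box_bound hS (show K + 1 ≤ n by omega) β.1
          (show β.2.2 + 1 ≤ (S (K + 1) β.1).part β.2.1 by omega)
      have hXY : u α.1 * q ^ (2 * ((α.2.2 : ℤ) - (α.2.1 : ℤ))) ≠
          (u β.1 * q ^ (2 * ((β.2.2 : ℤ) - (β.2.1 : ℤ))))⁻¹ :=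
        ne_addrem hq hu hgen hda hdb
      exact ⟨by rw [hck, hck'], by rw [hck1, hck1'],
        by rw [hck, hck1, hck', hck1']; exact swap_arith _ _ _ hXY⟩
    · -- α rem, β add
      have hck : c (K + 1) = (u α.1 * q ^ (2 * ((α.2.2 : ℤ) - (α.2.1 : ℤ))))⁻¹ :=
        content_rem hc ha hja
      have hck' : c' (K + 1 + 1) = (u α.1 * q ^ (2 * ((α.2.2 : ℤ) - (α.2.1 : ℤ))))⁻¹ :=
        content_rem hc' (by rw [e2]; exact ha') (by rw [e2]; exact hja')
      have hck1 : c (K + 1 + 1) = u β.1 * q ^ (2 * ((β.2.2 : ℤ) - (β.2.1 : ℤ))) :=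
        content_add hc hb hjb
      have hck1' : c' (K + 1) = u β.1 * q ^ (2 * ((β.2.2 : ℤ) - (β.2.1 : ℤ))) :=
        content_add hc' (m := K) (by rw [e0]; exact hb') (by rw [e0]; exact hjb')
      have hda : |(α.2.2 : ℤ) - (α.2.1 : ℤ)| ≤ (n : ℤ) - 1 := by
        have h1 := ha.1
        exact box_bound hS (show K ≤ n by omega) α.1
          (show α.2.2 + 1 ≤ (S K α.1).part α.2.1 by omega)
      have hdb : |(β.2.2 : ℤ) - (β.2.1 : ℤ)| ≤ (n : ℤ) - 1 := by
        have h1 := hb.1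
        exact box_bound hS (show K + 1 + 1 ≤ n by omega) β.1
          (show β.2.2 + 1 ≤ (S (K + 1 + 1) β.1).part β.2.1 by omega)
      have hXY : (u α.1 * q ^ (2 * ((α.2.2 : ℤ) - (α.2.1 : ℤ))))⁻¹ ≠
          u β.1 * q ^ (2 * ((β.2.2 : ℤ) - (β.2.1 : ℤ))) :=
        (ne_addrem hq hu hgen hdb hda).symm
      exact ⟨by rw [hck, hck'], by rw [hck1, hck1'],
        by rw [hck, hck1, hck', hck1']; exact swap_arith _ _ _ hXY⟩
    · -- α rem, β rem
      have hck : c (K + 1) = (u α.1 * q ^ (2 * ((α.2.2 : ℤ) - (α.2.1 : ℤ))))⁻¹ :=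
        content_rem hc ha hja
      have hck' : c' (K + 1 + 1) = (u α.1 * q ^ (2 * ((α.2.2 : ℤ) - (α.2.1 : ℤ))))⁻¹ :=
        content_rem hc' (by rw [e2]; exact ha') (by rw [e2]; exact hja')
      have hck1 : c (K + 1 + 1) = (u β.1 * q ^ (2 * ((β.2.2 : ℤ) - (β.2.1 : ℤ))))⁻¹ :=
        content_rem hc hb hjb
      have hck1' : c' (K + 1) = (u β.1 * q ^ (2 * ((β.2.2 : ℤ) - (β.2.1 : ℤ))))⁻¹ :=
        content_rem hc' (m := K) (by rw [e0]; exact hb') hjb'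
      have hda : |(α.2.2 : ℤ) - (α.2.1 : ℤ)| ≤ (n : ℤ) - 1 := by
        have h1 := ha.1
        exact box_bound hS (show K ≤ n by omega) α.1
          (show α.2.2 + 1 ≤ (S K α.1).part α.2.1 by omega)
      have hdb : |(β.2.2 : ℤ) - (β.2.1 : ℤ)| ≤ (n : ℤ) - 1 := by
        have h1 := hb.1
        exact box_bound hS (show K + 1 ≤ n by omega) β.1
          (show β.2.2 + 1 ≤ (S (K + 1) β.1).part β.2.1 by omega)
      have hZ : u α.1 * q ^ (2 * ((α.2.2 : ℤ) - (α.2.1 : ℤ))) ≠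
          u β.1 * q ^ (2 * ((β.2.2 : ℤ) - (β.2.1 : ℤ))) := by
        refine ne_addadd hq hu horder hgen hda hdb ?_
        intro hcomp hdd
        rw [← hcomp] at hb hjb
        exact remrem_diag ha hb (by rw [← hja, ← hjb]; exact hdd)
      have hXY : (u α.1 * q ^ (2 * ((α.2.2 : ℤ) - (α.2.1 : ℤ))))⁻¹ ≠
          (u β.1 * q ^ (2 * ((β.2.2 : ℤ) - (β.2.1 : ℤ))))⁻¹ :=
        fun h => hZ (inv_injective h)
      exact ⟨by rw [hck, hck'], by rw [hck1, hck1'],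
        by rw [hck, hck1, hck', hck1']; exact swap_arith _ _ _ hXY⟩
  · -- part (b)
    intro α β hα hβ hrc
    have hcomp : α.1 = β.1 := by rcases hrc with h | h <;> exact h.1
    rcases hα with ⟨ha, hja⟩ | ⟨ha, hja⟩ <;> rcases hβ with ⟨hb, hjb⟩ | ⟨hb, hjb⟩ <;>
      rw [← hcomp] at hb hjb
    · -- add, add
      have hck : c (K + 1) = u α.1 * q ^ (2 * ((α.2.2 : ℤ) - (α.2.1 : ℤ))) :=
        content_add hc ha hja
      have hck1 : c (K + 1 + 1) = u α.1 * q ^ (2 * ((β.2.2 : ℤ) - (β.2.1 : ℤ))) := by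
        have := content_add hc hb (α := (α.1, β.2.1, β.2.2)) hjb
        exact this
      have hx : c (K + 1) ≠ 0 := by
        rw [hck]; exact mul_ne_zero (hu _) (zpow_ne_zero _ hq)
      rcases hrc with ⟨_, hri⟩ | ⟨_, hci⟩
      · -- same row : db = da + 1
        have hdb : (β.2.2 : ℤ) - (β.2.1 : ℤ) = ((α.2.2 : ℤ) - (α.2.1 : ℤ)) + 1 := by
          rw [← hri] at hjb
          have h1 := ha.1
          omega
        have hy : c (K + 1 + 1) = c (K + 1) * q ^ 2 := by
          rw [hck1, hck]
          exact qshift hq _ _ _ hdb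
        exact b_final_pos hq hx hq2 hy
      · -- same column : db = da - 1
        have hii : β.2.1 = α.2.1 + 1 :=
          addadd_col ha hb (by rw [← hjb, ← hci, hja])
        have hdb : (β.2.2 : ℤ) - (β.2.1 : ℤ) = ((α.2.2 : ℤ) - (α.2.1 : ℤ)) - 1 := by
          rw [hii]; rw [← hci]; push_cast; ring
        have hy : c (K + 1 + 1) = c (K + 1) * (q ^ 2)⁻¹ := by
          rw [hck1, hck]
          exact qshift' hq _ _ _ hdb
        exact b_final_neg hq hx hq2 hy
    · -- add, rem : contradiction with hne
      exfalso
      have hii : β.2.1 = α.2.1 := by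
        rcases hrc with ⟨_, hri⟩ | ⟨_, hci⟩
        · exact hri.symm
        · exact addrem_colrow ha hb (by rw [← hjb, ← hci, hja])
      exact hne (addrem_eq ha hb hii)
    · -- rem, add : contradiction with hne
      exfalso
      have hii : β.2.1 = α.2.1 := by
        rcases hrc with ⟨_, hri⟩ | ⟨_, hci⟩
        · exact hri.symm
        · exact remadd_colrow ha hb (by rw [← hjb, ← hci, hja])
      exact hne (remadd_eq ha hb hii)
    · -- rem, rem
      have hck : c (K + 1) = (u α.1 * q ^ (2 * ((α.2.2 : ℤ) - (α.2.1 : ℤ))))⁻¹ :=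
        content_rem hc ha hja
      have hck1 : c (K + 1 + 1) =
          (u α.1 * q ^ (2 * ((β.2.2 : ℤ) - (β.2.1 : ℤ))))⁻¹ := by
        have := content_rem hc hb (α := (α.1, β.2.1, β.2.2)) hjb
        exact this
      have hx : c (K + 1) ≠ 0 := by
        rw [hck]; exact inv_ne_zero (mul_ne_zero (hu _) (zpow_ne_zero _ hq))
      rcases hrc with ⟨_, hri⟩ | ⟨_, hci⟩
      · -- same row : db = da - 1
        have hdb : (β.2.2 : ℤ) - (β.2.1 : ℤ) = ((α.2.2 : ℤ) - (α.2.1 : ℤ)) - 1 := by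
          rw [← hri] at hjb
          have h1 := hb.1
          rw [← hri] at h1
          omega
        have hy : c (K + 1 + 1) = c (K + 1) * q ^ 2 := by
          rw [hck1, hck]
          exact qshift_inv hq _ _ _ hdb
        exact b_final_pos hq hx hq2 hy
      · -- same column : db = da + 1
        have hii : α.2.1 = β.2.1 + 1 :=
          remrem_col ha hb (by rw [← hjb, ← hci, hja])
        have hdb : (β.2.2 : ℤ) - (β.2.1 : ℤ) = ((α.2.2 : ℤ) - (α.2.1 : ℤ)) + 1 := by
          rw [hii, ← hci]; push_cast; ring
        have hy : c (K + 1 + 1) = c (K + 1) * (q ^ 2)⁻¹ := by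
          rw [hck1, hck]
          exact qshift_inv' hq _ _ _ hdb
        exact b_final_neg hq hx hq2 hy
end
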